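/- arXiv:1902.01698 — 2 statements merged into one kernel-verified Lean document; each statement's English description precedes it below -/
import Mathlib

section
/- The SEP estimator is unbiased: for every finite rooted tree T with cost function c, every budget B ∈ ℕ, every hypernode v, and every admissible family of selection probabilities P (assigning to each hypernode u with S(u) ≠ ∅ a strictly positive probability distribution on H(u)), the expected value of C_SEP(T_v) equals Cost(T_v)/|v|; equivalently, |v|·C_SEP(T_v) is an unbiased estimator of Cost(T_v). (Paper's Theorem 1.) -/
/-!
Write `|v| · C_SEP(T_v) = c(v) + |w| · C_SEP(T_w) / (C(|S(v)|-1, |w|-1) · P(w))`. Every node of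
`S(v)` lies in exactly `C(|S(v)|-1, |w|-1)` of the hyperchildren `w ∈ H(v)`, so averaging
`Cost(T_w)` against `P` after dividing by `C(|S(v)|-1, |w|-1) · P(w)` gives
`Cost(T_{S(v)})`, and `Cost(T_v) = c(v) + Cost(T_{S(v)})`. Since the recursion is affine in
the estimator of the next level, unbiasedness propagates upwards by induction on the height.
-/

open Finset

/-- A finite rooted tree on a finite node type `V`.  The root is its own parent,
every non-root node has a parent whose depth is one smaller, and the root is the
unique node of depth `0`. -/
structure FinRootedTree (V : Type) [Fintype V] [DecidableEq V] where
  root : V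
  parent : V → V
  depth : V → ℕ
  depth_root : depth root = 0
  parent_root : parent root = root
  depth_parent : ∀ v, v ≠ root → depth (parent v) + 1 = depth v
  eq_root_of_depth_zero : ∀ v, depth v = 0 → v = root

namespace FinRootedTree

variable {V : Type} [Fintype V] [DecidableEq V]

/-- The set of children of a node. -/
def children (T : FinRootedTree V) (x : V) : Finset V :=
  Finset.univ.filter fun w => w ≠ T.root ∧ T.parent w = x

/-- `S(v)`: the set of all children of nodes of a hypernode `v`. -/
def succs (T : FinRootedTree V) (v : Finset V) : Finset V :=
  v.biUnion T.children

/-- The set of nodes of the subtree rooted at `x` (the descendants of `x`,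
including `x` itself). -/
def desc (T : FinRootedTree V) (x : V) : Finset V :=
  Finset.univ.filter fun w =>
    x ∈ (Finset.range (T.depth w + 1)).image fun k => T.parent^[k] w

/-- `Cost(T_x)`: the total cost of the subtree rooted at `x`. -/
noncomputable def subtreeCost (T : FinRootedTree V) (c : V → ℝ) (x : V) : ℝ :=
  ∑ w ∈ T.desc x, c w

/-- `Cost(T_v)`: the total cost of the forest rooted at the hypernode `v`. -/
noncomputable def forestCost (T : FinRootedTree V) (c : V → ℝ) (v : Finset V) : ℝ :=
  ∑ x ∈ v, T.subtreeCost c x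

/-- `H(v)`: the hyperchildren of `v` for budget `B`, i.e. the subsets of `S(v)`
of size `min B |S(v)|`. -/
def hyper (T : FinRootedTree V) (B : ℕ) (v : Finset V) : Finset (Finset V) :=
  (T.succs v).powersetCard (min B (T.succs v).card)

/-- A hypernode: a nonempty set of distinct nodes, all at the same depth. -/
def IsHypernode (T : FinRootedTree V) (v : Finset V) : Prop :=
  v.Nonempty ∧ ∀ a ∈ v, ∀ b ∈ v, T.depth a = T.depth b

/-- Expectation functional of the SEP estimator `C_SEP(T_v)` (with selection
probabilities `P`): `sepE T c B P fuel v g` is `E[g(C_SEP(T_v))]`, defined by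
the recursion of Algorithm 1, with enough fuel to reach the leaves. -/
noncomputable def sepE (T : FinRootedTree V) (c : V → ℝ) (B : ℕ)
    (P : Finset V → Finset V → ℝ) : ℕ → Finset V → (ℝ → ℝ) → ℝ
  | 0, v, g => g ((∑ x ∈ v, c x) / (v.card : ℝ))
  | fuel + 1, v, g =>
      if T.succs v = ∅ then g ((∑ x ∈ v, c x) / (v.card : ℝ))
      else
        ∑ w ∈ T.hyper B v,
          P v w *
            sepE T c B P fuel w fun y =>
              g ((∑ x ∈ v, c x) / (v.card : ℝ) +
                (w.card : ℝ) * y /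
                  ((v.card : ℝ) * ((((T.succs v).card - 1).choose (w.card - 1) : ℕ) : ℝ) *
                    P v w))

theorem _root_.Finset.sum_powersetCard_sum {α β : Type*} [DecidableEq α] [AddCommMonoid β]
    (s : Finset α) {m : ℕ} (hm : 1 ≤ m) (f : α → β) :
    ∑ t ∈ s.powersetCard m, ∑ x ∈ t, f x = (#s - 1).choose (m - 1) • ∑ x ∈ s, f x := by
  rw [sum_comm' (t' := s) (s' := fun x => (s.powersetCard m).filter (x ∈ ·))]
  · rw [smul_sum]
    refine sum_congr rfl fun x hx => ?_
    have hcard := card_filter_powersetCard_subset {x} s m (singleton_subset_iff.2 hx) (by simpa)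
    simp only [singleton_subset_iff, card_singleton] at hcard
    rw [sum_const, hcard]
  · intro t x
    simp only [mem_filter, mem_powersetCard]
    exact ⟨fun ⟨hts, hxt⟩ => ⟨⟨hts, hxt⟩, hts.1 hxt⟩, fun h => h.1⟩

section

variable (T : FinRootedTree V)

theorem mem_children {x y : V} : y ∈ T.children x ↔ y ≠ T.root ∧ T.parent y = x := by
  simp [children]

theorem depth_of_mem_children {x y : V} (h : y ∈ T.children x) :
    T.depth y = T.depth x + 1 := by
  obtain ⟨hy, rfl⟩ := T.mem_children.1 h
  exact (T.depth_parent y hy).symm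

theorem children_disjoint {x y : V} (hxy : x ≠ y) : Disjoint (T.children x) (T.children y) :=
  disjoint_left.2 fun _ hx hy => hxy ((T.mem_children.1 hx).2.symm.trans (T.mem_children.1 hy).2)

theorem depth_iterate_parent {w : V} {k : ℕ} (hk : k ≤ T.depth w) :
    T.depth (T.parent^[k] w) = T.depth w - k := by
  induction k with
  | zero => rfl
  | succ k ih =>
    have hk' := ih (by omega)
    have hne : T.parent^[k] w ≠ T.root := by
      intro h
      rw [h, T.depth_root] at hk'
      omega
    rw [Function.iterate_succ_apply']
    have := T.depth_parent _ hne
    omega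

theorem depth_lt_card (x : V) : T.depth x < Fintype.card V := by
  have hinj : Function.Injective fun k : Fin (T.depth x + 1) => T.parent^[k] x := by
    intro i j hij
    have hi := T.depth_iterate_parent (w := x) (k := i) (by omega)
    have hj := T.depth_iterate_parent (w := x) (k := j) (by omega)
    simp only at hij
    rw [hij] at hi
    exact Fin.ext (by omega)
  simpa using Fintype.card_le_of_injective _ hinj

theorem mem_desc {x w : V} : w ∈ T.desc x ↔ ∃ k ≤ T.depth w, T.parent^[k] w = x := by
  simp [desc]

theorem desc_eq_insert_biUnion (x : V) :
    T.desc x = insert x ((T.children x).biUnion T.desc) := by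
  ext w
  simp only [mem_insert, mem_biUnion, T.mem_desc]
  constructor
  · rintro ⟨_ | j, hk, hjx⟩
    · exact .inl hjx
    have hdepth := T.depth_iterate_parent (w := w) (k := j) (by omega)
    refine .inr ⟨T.parent^[j] w, T.mem_children.2 ⟨?_, ?_⟩, j, by omega, rfl⟩
    · intro h
      rw [h, T.depth_root] at hdepth
      omega
    · rwa [← Function.iterate_succ_apply' T.parent j w]
  · rintro (rfl | ⟨y, hy, k, hk, rfl⟩)
    · exact ⟨0, by omega, rfl⟩
    have hdepth := T.depth_iterate_parent hk
    have hchild := T.depth_of_mem_children hy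
    refine ⟨k + 1, by omega, ?_⟩
    rw [Function.iterate_succ_apply']
    exact (T.mem_children.1 hy).2

theorem desc_disjoint {x y : V} (hd : T.depth x = T.depth y) (hxy : x ≠ y) :
    Disjoint (T.desc x) (T.desc y) := by
  refine disjoint_left.2 fun w hwx hwy => ?_
  obtain ⟨k, hk, rfl⟩ := T.mem_desc.1 hwx
  obtain ⟨j, hj, rfl⟩ := T.mem_desc.1 hwy
  have hk' := T.depth_iterate_parent hk
  have hj' := T.depth_iterate_parent hj
  obtain rfl : k = j := by omega
  exact hxy rfl

theorem notMem_desc_of_mem_children {x y : V} (hy : y ∈ T.children x) : x ∉ T.desc y := by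
  intro h
  obtain ⟨k, hk, rfl⟩ := T.mem_desc.1 h
  have := T.depth_iterate_parent hk
  have := T.depth_of_mem_children hy
  omega

theorem subtreeCost_eq_add_sum_children (c : V → ℝ) (x : V) :
    T.subtreeCost c x = c x + ∑ y ∈ T.children x, T.subtreeCost c y := by
  rw [subtreeCost, T.desc_eq_insert_biUnion x, sum_insert, sum_biUnion]
  · rfl
  · exact fun a ha b hb => T.desc_disjoint
      (by rw [T.depth_of_mem_children ha, T.depth_of_mem_children hb])
  · simp only [mem_biUnion, not_exists, not_and]
    exact fun y hy => T.notMem_desc_of_mem_children hy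

theorem forestCost_eq_add_forestCost_succs (c : V → ℝ) (v : Finset V) :
    T.forestCost c v = ∑ x ∈ v, c x + T.forestCost c (T.succs v) := by
  rw [forestCost, forestCost, succs, sum_biUnion fun a _ b _ => T.children_disjoint,
    ← sum_add_distrib]
  exact sum_congr rfl fun x _ => T.subtreeCost_eq_add_sum_children c x

theorem IsHypernode.depth_of_mem_succs {T : FinRootedTree V} {v : Finset V}
    (hv : T.IsHypernode v) {x y : V} (hx : x ∈ v) (hy : y ∈ T.succs v) :
    T.depth y = T.depth x + 1 := by
  obtain ⟨x', hx', hyx'⟩ := mem_biUnion.1 hy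
  rw [T.depth_of_mem_children hyx', hv.2 x' hx' x hx]

theorem card_of_mem_hyper {B : ℕ} {v w : Finset V} (hw : w ∈ T.hyper B v) :
    #w = min B #(T.succs v) :=
  (mem_powersetCard.1 hw).2

theorem one_le_min_card_succs {B : ℕ} (hB : 1 ≤ B) {v : Finset V} (hS : T.succs v ≠ ∅) :
    1 ≤ min B #(T.succs v) :=
  le_min hB (card_pos.2 (nonempty_iff_ne_empty.2 hS))

theorem isHypernode_of_mem_hyper {B : ℕ} (hB : 1 ≤ B) {v w : Finset V} (hv : T.IsHypernode v)
    (hS : T.succs v ≠ ∅) (hw : w ∈ T.hyper B v) : T.IsHypernode w := by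
  have hwS := (mem_powersetCard.1 hw).1
  obtain ⟨x, hx⟩ := hv.1
  refine ⟨card_pos.1 ?_, fun a ha b hb => ?_⟩
  · rw [T.card_of_mem_hyper hw]
    exact T.one_le_min_card_succs hB hS
  · rw [hv.depth_of_mem_succs hx (hwS ha), hv.depth_of_mem_succs hx (hwS hb)]

theorem sum_forestCost_hyper (c : V → ℝ) {B : ℕ} (hB : 1 ≤ B) {v : Finset V}
    (hS : T.succs v ≠ ∅) :
    ∑ w ∈ T.hyper B v, T.forestCost c w =
      ((#(T.succs v) - 1).choose (min B #(T.succs v) - 1) : ℕ) * T.forestCost c (T.succs v) := by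
  rw [← nsmul_eq_mul]
  exact sum_powersetCard_sum _ (T.one_le_min_card_succs hB hS) _

theorem sepE_of_affine (c : V → ℝ) {B : ℕ} (hB : 1 ≤ B) {P : Finset V → Finset V → ℝ}
    (hP : ∀ u : Finset V, T.IsHypernode u → T.succs u ≠ ∅ →
      (∀ w ∈ T.hyper B u, 0 < P u w) ∧ (∑ w ∈ T.hyper B u, P u w) = 1)
    (fuel : ℕ) {v : Finset V} (hv : T.IsHypernode v)
    (hfuel : ∀ x ∈ v, ∀ y : V, T.depth y < T.depth x + fuel)
    {g : ℝ → ℝ} {a b : ℝ} (hg : ∀ y, g y = a * y + b) :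
    sepE T c B P fuel v g = a * (T.forestCost c v / #v) + b := by
  induction fuel generalizing v g a b with
  | zero =>
    obtain ⟨x, hx⟩ := hv.1
    exact absurd (hfuel x hx x) (lt_irrefl _)
  | succ fuel ih =>
    by_cases hS : T.succs v = ∅
    · rw [sepE, if_pos hS, hg, T.forestCost_eq_add_forestCost_succs c v, hS]
      simp [forestCost]
    obtain ⟨hPpos, hPsum⟩ := hP v hv hS
    obtain ⟨x, hx⟩ := hv.1
    set n := #(T.succs v)
    set C : ℝ := (((n - 1).choose (min B n - 1) : ℕ) : ℝ)
    set m := (∑ x ∈ v, c x) / #v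
    have hv0 : (#v : ℝ) ≠ 0 := by exact_mod_cast (card_pos.2 hv.1).ne'
    have hC : C ≠ 0 := by
      have := T.one_le_min_card_succs hB hS
      exact Nat.cast_ne_zero.2 (Nat.choose_pos (by omega)).ne'
    have hterm : ∀ w ∈ T.hyper B v,
        P v w * sepE T c B P fuel w (fun y =>
          g (m + #w * y / (#v * ((n - 1).choose (#w - 1) : ℕ) * P v w))) =
        a / (#v * C) * T.forestCost c w + P v w * (a * m + b) := by
      intro w hw
      have hw0 : (#w : ℝ) ≠ 0 := by
        exact_mod_cast (card_pos.2 (T.isHypernode_of_mem_hyper hB hv hS hw).1).ne'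
      have hP0 := (hPpos w hw).ne'
      have hwfuel : ∀ y ∈ w, ∀ z : V, T.depth z < T.depth y + fuel := fun y hy z => by
        rw [hv.depth_of_mem_succs hx ((mem_powersetCard.1 hw).1 hy)]
        have := hfuel x hx z
        omega
      rw [ih (T.isHypernode_of_mem_hyper hB hv hS hw) hwfuel
        (a := a * #w / (#v * C * P v w)) (b := a * m + b)]
      · field_simp
      · intro y
        rw [hg, T.card_of_mem_hyper hw]
        ring
    have hsum : ∑ w ∈ T.hyper B v, T.forestCost c w = C * T.forestCost c (T.succs v) :=
      T.sum_forestCost_hyper c hB hS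
    rw [sepE, if_neg hS, sum_congr rfl hterm, sum_add_distrib, ← mul_sum, ← sum_mul, hPsum, hsum,
      T.forestCost_eq_add_forestCost_succs c v]
    simp only [m]
    field_simp
    ring

end

theorem sep_unbiased_general (T : FinRootedTree V) (c : V → ℝ)
    (B : ℕ) (hB : 1 ≤ B) (P : Finset V → Finset V → ℝ)
    (hP : ∀ u : Finset V, T.IsHypernode u → T.succs u ≠ ∅ →
      (∀ w ∈ T.hyper B u, 0 < P u w) ∧ (∑ w ∈ T.hyper B u, P u w) = 1)
    (v : Finset V) (hv : T.IsHypernode v) :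
    sepE T c B P (Fintype.card V) v id = T.forestCost c v / (v.card : ℝ) ∧
    (v.card : ℝ) * sepE T c B P (Fintype.card V) v id = T.forestCost c v := by
  have hmean : sepE T c B P (Fintype.card V) v id = T.forestCost c v / #v := by
    simpa using T.sepE_of_affine c hB hP (Fintype.card V) hv
      (fun x _ y => (T.depth_lt_card y).trans_le (Nat.le_add_left _ _)) (a := 1) (b := 0)
      (fun y => by simp)
  have hv0 : (#v : ℝ) ≠ 0 := by exact_mod_cast (card_pos.2 hv.1).ne'
  exact ⟨hmean, by rw [hmean, mul_div_cancel₀ _ hv0]⟩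

/-- Paper's Theorem 1: the SEP estimator is unbiased, i.e.
`E[C_SEP(T_v)] = Cost(T_v)/|v|`; equivalently `|v| * C_SEP(T_v)` is an unbiased
estimator of `Cost(T_v)`. -/
theorem sep_unbiased (T : FinRootedTree V) (c : V → ℝ) (hc : ∀ x, 0 ≤ c x)
    (B : ℕ) (hB : 1 ≤ B) (P : Finset V → Finset V → ℝ)
    (hP : ∀ u : Finset V, T.IsHypernode u → T.succs u ≠ ∅ →
      (∀ w ∈ T.hyper B u, 0 < P u w) ∧ (∑ w ∈ T.hyper B u, P u w) = 1)
    (v : Finset V) (hv : T.IsHypernode v) :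
    sepE T c B P (Fintype.card V) v id = T.forestCost c v / (v.card : ℝ) ∧
    (v.card : ℝ) * sepE T c B P (Fintype.card V) v id = T.forestCost c v :=
  sep_unbiased_general T c B hB P hP v hv

end FinRootedTree
end

section
/- Consider the two-stage selection used in Algorithm 2: given a finite set S of size at least k ≥ 1 and a positive weight function r on S, first select an element x ∈ S with probability r(x)/r(S), then select a uniformly random (k−1)-element subset of S \ {x}, and output the k-element set consisting of x together with the selected subset. Then for every k-element subset w ⊆ S, the probability that w is output equals r(w) / ( r(S) · C(|S|−1, k−1) ), where r(A) = Σ_{a ∈ A} r(a) and C(n, m) is the binomial coefficient. (Claim established in the proof of the paper's Theorem 3.) -/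
open Finset

/-- Two-stage selection (as in Algorithm 2): pick `x ∈ S` with probability
`r(x)/r(S)`, then pick a uniformly random `(k-1)`-element subset `u` of
`S \ {x}`, and output `insert x u`.  The probability that the output is a given
`k`-element subset `w ⊆ S` equals `r(w) / (r(S) · C(|S|-1, k-1))`. -/
theorem two_stage_selection_prob {α : Type} [DecidableEq α]
    (S : Finset α) (k : ℕ) (hk : 1 ≤ k) (hkS : k ≤ S.card)
    (r : α → ℝ) (hr : ∀ a ∈ S, 0 < r a)
    (w : Finset α) (hwS : w ⊆ S) (hwk : w.card = k) :
    (∑ x ∈ S, (r x / ∑ a ∈ S, r a) *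
      ∑ u ∈ (S \ {x}).powersetCard (k - 1),
        (1 / (((S.card - 1).choose (k - 1) : ℕ) : ℝ)) *
          (if insert x u = w then 1 else 0)) =
    (∑ a ∈ w, r a) / ((∑ a ∈ S, r a) * (((S.card - 1).choose (k - 1) : ℕ) : ℝ)) := by
  set R : ℝ := ∑ a ∈ S, r a with hR
  set C : ℝ := (((S.card - 1).choose (k - 1) : ℕ) : ℝ) with hC
  have key : ∀ x ∈ S,
      (∑ u ∈ (S \ {x}).powersetCard (k - 1),
        (1 / C) * (if insert x u = w then 1 else 0)) =
      (if x ∈ w then (1 / C) else 0) := by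
    intro x hx
    by_cases hxw : x ∈ w
    · rw [Finset.sum_eq_single (w.erase x)]
      · simp [Finset.insert_erase hxw, hxw]
      · intro u hu hne
        rw [Finset.mem_powersetCard] at hu
        have hxu : x ∉ u := fun h => (Finset.mem_sdiff.mp (hu.1 h)).2 (by simp)
        have hne' : insert x u ≠ w := by
          intro h
          exact hne (by rw [← h, Finset.erase_insert hxu])
        simp [hne']
      · intro h
        exfalso
        apply h
        rw [Finset.mem_powersetCard]
        refine ⟨fun a ha => ?_, by rw [Finset.card_erase_of_mem hxw, hwk]⟩
        rw [Finset.mem_sdiff]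
        exact ⟨hwS (Finset.mem_of_mem_erase ha),
          by simpa using Finset.ne_of_mem_erase ha⟩
    · rw [if_neg hxw]
      apply Finset.sum_eq_zero
      intro u hu
      have : insert x u ≠ w := fun h => hxw (h ▸ Finset.mem_insert_self x u)
      simp [this, hxw]
  rw [Finset.sum_congr rfl (fun x hx => by rw [key x hx])]
  have step : ∑ x ∈ S, (r x / R) * (if x ∈ w then (1 / C) else 0) =
      ∑ x ∈ w, r x / (R * C) := by
    rw [← Finset.sum_subset hwS (fun x hx hxw => by simp [hxw])]
    refine Finset.sum_congr rfl fun x hx => ?_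
    rw [if_pos hx, div_mul_div_comm, mul_one]
  rw [step, ← Finset.sum_div]
end
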